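/- Every Mersenne prime p = 2^n − 1 is (2,2)-constructible in O(log n) = O(log log p) steps: there is an absolute constant C such that for all n ≥ 2, the number 2^n − 1 is (2,2)-constructible in at most C log_2 n steps. -/

import Mathlib

/-- The ℓ1-norm of a multivariate integer polynomial. -/
noncomputable def l1Norm {n : ℕ} (f : MvPolynomial (Fin n) ℤ) : ℕ :=
  ∑ m ∈ f.support, (f.coeff m).natAbs

/-- A natural number `r` is `(k,t)`-constructible in at most `n` steps if there is a
sequence of naturals `0 = a 0, a 1, …, a m = r` with `m ≤ n` such that each `a i`
(`1 ≤ i ≤ m`) is the value at `(a 0, …, a (i-1))` of an integer polynomial of degree at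
most `t` and ℓ1-norm at most `k`. -/
def Constructible (k t n r : ℕ) : Prop :=
  ∃ m ≤ n, ∃ a : ℕ → ℕ, a 0 = 0 ∧ a m = r ∧
    ∀ i, 1 ≤ i → i ≤ m →
      ∃ f : MvPolynomial (Fin i) ℤ, f.totalDegree ≤ t ∧ l1Norm f ≤ k ∧
        MvPolynomial.aeval (fun j : Fin i => (a j : ℤ)) f = (a i : ℤ)

/-!
Each of the maps `x ↦ x + 1`, `x ↦ 2 * x`, `x ↦ x ^ 2`, `x ↦ x - 1` is an integer polynomial
of degree at most 2 and ℓ1-norm at most 2 in the last entry of a chain. Starting from `1`,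
squaring and then doubling or not reads off the binary digits of `n` from the top, so `2 ^ n`
is reached in `2 * n.size + 1` steps and `2 ^ n - 1` in one more, with `n.size ≤ log₂ n + 1`.
-/

open MvPolynomial

section l1Norm

variable {n : ℕ}

theorem l1Norm_monomial (s : Fin n →₀ ℕ) (c : ℤ) : l1Norm (monomial s c) = c.natAbs := by
  classical
  rcases eq_or_ne c 0 with rfl | hc
  · simp [l1Norm]
  · rw [l1Norm, support_monomial, if_neg hc, Finset.sum_singleton, coeff_monomial, if_pos rfl]

theorem l1Norm_C (c : ℤ) : l1Norm (C c : MvPolynomial (Fin n) ℤ) = c.natAbs :=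
  l1Norm_monomial 0 c

theorem l1Norm_X (i : Fin n) : l1Norm (X i : MvPolynomial (Fin n) ℤ) = 1 :=
  l1Norm_monomial _ 1

theorem l1Norm_add_le (f g : MvPolynomial (Fin n) ℤ) :
    l1Norm (f + g) ≤ l1Norm f + l1Norm g := by
  classical
  have hf : l1Norm f = ∑ m ∈ f.support ∪ g.support, (f.coeff m).natAbs :=
    Finset.sum_subset Finset.subset_union_left fun m _ hm => by simp [notMem_support_iff.mp hm]
  have hg : l1Norm g = ∑ m ∈ f.support ∪ g.support, (g.coeff m).natAbs :=
    Finset.sum_subset Finset.subset_union_right fun m _ hm => by simp [notMem_support_iff.mp hm]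
  calc l1Norm (f + g)
      ≤ ∑ m ∈ f.support ∪ g.support, ((f + g).coeff m).natAbs :=
        Finset.sum_le_sum_of_subset support_add
    _ ≤ ∑ m ∈ f.support ∪ g.support, ((f.coeff m).natAbs + (g.coeff m).natAbs) :=
        Finset.sum_le_sum fun m _ => Int.natAbs_add_le _ _
    _ = l1Norm f + l1Norm g := by rw [Finset.sum_add_distrib, hf, hg]

end l1Norm

theorem l1Norm_rename_of_injective {m n : ℕ} {e : Fin m → Fin n} (he : Function.Injective e)
    (f : MvPolynomial (Fin m) ℤ) : l1Norm (rename e f) = l1Norm f := by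
  classical
  rw [l1Norm, support_rename_of_injective he, Finset.sum_image
    fun _ _ _ _ h => Finsupp.mapDomain_injective he h]
  simp only [coeff_rename_mapDomain e he, l1Norm]

namespace Constructible

variable {k t n v : ℕ}

theorem zero : Constructible k t 0 0 :=
  ⟨0, le_rfl, fun _ => 0, rfl, rfl, fun _ h1 h0 => absurd (h1.trans h0) (by norm_num)⟩

theorem mono {n' r : ℕ} (h : Constructible k t n r) (hn : n ≤ n') : Constructible k t n' r :=
  let ⟨m, hm, rest⟩ := h
  ⟨m, hm.trans hn, rest⟩

theorem succ_of_eval (h : Constructible k t n v) {w : ℕ} (p : MvPolynomial (Fin 1) ℤ)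
    (hdeg : p.totalDegree ≤ t) (hnorm : l1Norm p ≤ k) (hp : aeval (fun _ => (v : ℤ)) p = w) :
    Constructible k t (n + 1) w := by
  obtain ⟨m, hm, a, ha0, ham, hstep⟩ := h
  set a' := Function.update a (m + 1) w
  have ha' : ∀ j ≤ m, a' j = a j := fun j hj => Function.update_of_ne (by omega) _ _
  have ha'_last : a' (m + 1) = w := Function.update_self ..
  refine ⟨m + 1, by omega, a', by rw [ha' 0 m.zero_le, ha0], ha'_last, ?_⟩
  intro i hi1 hi
  rcases Nat.lt_or_ge i (m + 1) with hlt | hge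
  · obtain ⟨f, hfdeg, hfnorm, hf⟩ := hstep i hi1 (by omega)
    refine ⟨f, hfdeg, hfnorm, ?_⟩
    have hprefix : (fun j : Fin i => (a' j : ℤ)) = fun j : Fin i => (a j : ℤ) :=
      funext fun j => by rw [ha' j (by omega)]
    rw [hprefix, hf, ha' i (by omega)]
  · obtain rfl : i = m + 1 := by omega
    refine ⟨rename (fun _ => Fin.last m) p, (totalDegree_rename_le _ p).trans hdeg,
      (l1Norm_rename_of_injective (Function.injective_of_subsingleton _) p).le.trans hnorm, ?_⟩
    have hlast :
        (fun j : Fin (m + 1) => (a' j : ℤ)) ∘ (fun _ : Fin 1 => Fin.last m) = fun _ => (v : ℤ) :=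
      funext fun _ => by simp [ha' m le_rfl, ham]
    rw [aeval_rename, hlast, hp, ha'_last]

theorem add_one (h : Constructible k t n v) (hk : 2 ≤ k) (ht : 1 ≤ t) :
    Constructible k t (n + 1) (v + 1) := by
  refine h.succ_of_eval (X 0 + C 1) ?_ ?_ (by simp)
  · exact (totalDegree_add _ _).trans (by simpa using ht)
  · exact (l1Norm_add_le _ _).trans (by rw [l1Norm_X, l1Norm_C, Int.natAbs_one]; omega)

theorem sub_one (h : Constructible k t n v) (hk : 2 ≤ k) (ht : 1 ≤ t) (hv : 1 ≤ v) :
    Constructible k t (n + 1) (v - 1) := by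
  refine h.succ_of_eval (X 0 + C (-1)) ?_ ?_ (by simp [Nat.cast_sub hv, sub_eq_add_neg])
  · exact (totalDegree_add _ _).trans (by simpa using ht)
  · exact (l1Norm_add_le _ _).trans (by rw [l1Norm_X, l1Norm_C]; omega)

theorem two_mul (h : Constructible k t n v) (hk : 2 ≤ k) (ht : 1 ≤ t) :
    Constructible k t (n + 1) (2 * v) := by
  refine h.succ_of_eval (monomial (Finsupp.single 0 1) 2) ?_ ?_ (by simp [aeval_monomial])
  · simpa [totalDegree_monomial] using ht
  · simpa [l1Norm_monomial] using hk

theorem sq (h : Constructible k t n v) (hk : 1 ≤ k) (ht : 2 ≤ t) :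
    Constructible k t (n + 1) (v ^ 2) := by
  refine h.succ_of_eval (X 0 ^ 2) (by simpa using ht) ?_ (by simp)
  simpa [X_pow_eq_monomial, l1Norm_monomial] using hk

end Constructible

theorem constructible_two_pow {k t : ℕ} (hk : 2 ≤ k) (ht : 2 ≤ t) (n : ℕ) :
    Constructible k t (2 * n.size + 1) (2 ^ n) := by
  induction n using Nat.binaryRec' with
  | zero => simpa using Constructible.zero.add_one hk (by omega)
  | bit b n hb ih =>
    have hsize : (n.bit b).size = n.size + 1 := Nat.size_bit (Nat.bit_ne_zero_iff.2 hb)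
    have hsq := ih.sq (by omega) ht
    rw [hsize]
    cases b
    · rw [Nat.bit_false, pow_mul']
      exact hsq.mono (by omega)
    · rw [Nat.bit_true, pow_succ', pow_mul']
      exact hsq.two_mul hk (by omega)

theorem Nat.size_le_logb_add_one (n : ℕ) : (n.size : ℝ) ≤ Real.logb 2 n + 1 := by
  have hsize : n.size ≤ Nat.log 2 n + 1 := Nat.size_le.2 (Nat.lt_pow_succ_log_self one_lt_two n)
  have hlog : (Nat.log 2 n : ℝ) ≤ Real.logb 2 n := by exact_mod_cast Real.natLog_le_logb n 2
  have hsize' : (n.size : ℝ) ≤ Nat.log 2 n + 1 := by exact_mod_cast hsize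
  linarith

/-- There is an absolute constant `C` such that for every `n ≥ 2` the Mersenne number
`2^n − 1` is `(2,2)`-constructible in at most `C log₂ n` steps. -/
theorem mersenne_constructible :
    ∃ C : ℝ, ∀ n : ℕ, 2 ≤ n →
      ∃ m : ℕ, (m : ℝ) ≤ C * Real.logb 2 n ∧ Constructible 2 2 m (2 ^ n - 1) := by
  refine ⟨6, fun n hn => ⟨2 * n.size + 2, ?_, ?_⟩⟩
  · have hlogb : 1 ≤ Real.logb 2 n := by
      rw [Real.le_logb_iff_rpow_le one_lt_two (by positivity), Real.rpow_one]
      exact_mod_cast hn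
    push_cast
    linarith [n.size_le_logb_add_one]
  · exact (constructible_two_pow le_rfl le_rfl n).sub_one le_rfl one_le_two Nat.one_le_two_pow
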